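/- arXiv:2605.27961 — 3 statements merged into one kernel-verified Lean document; each statement's English description precedes it below -/
import Mathlib

section
/- Let B be the Banach space of power series f(T) = Σ a_n T^n with ‖f‖ = Σ |a_n| r^n < ∞ for a fixed real r with 0 < r < 1. For polynomials in an auxiliary variable U with coefficients in B, if Σ_{i=0}^{n+1} b_i U^i = (T - U) · Σ_{i=0}^{n} c_i U^i in B[U], then Σ_{i=0}^{n} ‖c_i‖ ≤ (1/(1-r)) · Σ_{k=0}^{n+1} ‖b_k‖. -/
/-! The relation `p = (T - U) q` gives the backward recursion `q_j = T q_{j+1} - p_{j+1}`, so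
`‖q_j‖ ≤ ‖p_{j+1}‖ + r ‖q_{j+1}‖`. Summing over `j ≤ n` (with `q_{n+1} = 0`) gives
`Σ ‖q_j‖ ≤ Σ ‖p_k‖ + r Σ ‖q_j‖`, i.e. `(1 - r) Σ ‖q_j‖ ≤ Σ ‖p_k‖`. -/

open Polynomial Finset

theorem one_sub_mul_sum_range_le_of_le_add_mul_succ {x y : ℕ → ℝ} {ρ : ℝ} (n : ℕ)
    (hρ : 0 ≤ ρ) (hx : ∀ i, 0 ≤ x i) (hy : ∀ i, 0 ≤ y i) (hxn : x (n + 1) = 0)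
    (h : ∀ j, x j ≤ y (j + 1) + ρ * x (j + 1)) :
    (1 - ρ) * ∑ i ∈ range (n + 1), x i ≤ ∑ k ∈ range (n + 2), y k := by
  have hsum : ∑ i ∈ range (n + 1), x i ≤
      ∑ i ∈ range (n + 1), y (i + 1) + ρ * ∑ i ∈ range (n + 1), x (i + 1) := by
    rw [mul_sum, ← sum_add_distrib]
    exact sum_le_sum fun j _ => h j
  have hx_shift : ∑ i ∈ range (n + 1), x (i + 1) + x 0 = ∑ i ∈ range (n + 1), x i := by
    rw [← sum_range_succ', sum_range_succ, hxn, add_zero]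
  have hy_shift : ∑ i ∈ range (n + 1), y (i + 1) + y 0 = ∑ k ∈ range (n + 2), y k :=
    (sum_range_succ' y (n + 1)).symm
  nlinarith [hx 0, hy 0]

namespace Polynomial

variable {R : Type*}

theorem coeff_C_sub_X_mul_succ [Ring R] (a : R) (q : R[X]) (j : ℕ) :
    ((C a - X) * q).coeff (j + 1) = a * q.coeff (j + 1) - q.coeff j := by
  simp only [sub_mul, coeff_sub, coeff_C_mul, coeff_X_mul]

theorem norm_coeff_le_norm_coeff_C_sub_X_mul_succ_add [SeminormedRing R] (a : R) (q : R[X])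
    (j : ℕ) :
    ‖q.coeff j‖ ≤ ‖((C a - X) * q).coeff (j + 1)‖ + ‖a‖ * ‖q.coeff (j + 1)‖ :=
  calc ‖q.coeff j‖ = ‖a * q.coeff (j + 1) - ((C a - X) * q).coeff (j + 1)‖ := by
        rw [coeff_C_sub_X_mul_succ, sub_sub_cancel]
    _ ≤ ‖a * q.coeff (j + 1)‖ + ‖((C a - X) * q).coeff (j + 1)‖ := norm_sub_le _ _
    _ ≤ ‖a‖ * ‖q.coeff (j + 1)‖ + ‖((C a - X) * q).coeff (j + 1)‖ := by
        gcongr; exact norm_mul_le _ _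
    _ = _ := add_comm _ _

theorem one_sub_norm_mul_sum_norm_coeff_le [SeminormedRing R] (a : R) {q : R[X]} {n : ℕ}
    (hq : q.natDegree ≤ n) :
    (1 - ‖a‖) * ∑ i ∈ range (n + 1), ‖q.coeff i‖ ≤
      ∑ k ∈ range (n + 2), ‖((C a - X) * q).coeff k‖ :=
  one_sub_mul_sum_range_le_of_le_add_mul_succ n (norm_nonneg a) (fun _ => norm_nonneg _)
    (fun _ => norm_nonneg _)
    (by rw [coeff_eq_zero_of_natDegree_lt (by omega), norm_zero])
    (norm_coeff_le_norm_coeff_C_sub_X_mul_succ_add a q)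

end Polynomial

theorem stmt0_general {B : Type*} [NormedCommRing B] (r : ℝ) (hr1 : r < 1)
    (T : B) (hT : ‖T‖ = r) (n : ℕ) (p q : Polynomial B)
    (hq : q.natDegree ≤ n)
    (heq : p = (Polynomial.C T - Polynomial.X) * q) :
    ∑ i ∈ Finset.range (n + 1), ‖q.coeff i‖ ≤
      (1 / (1 - r)) * ∑ k ∈ Finset.range (n + 2), ‖p.coeff k‖ := by
  subst heq hT
  rw [one_div_mul_eq_div, le_div_iff₀ (sub_pos.2 hr1), mul_comm]
  exact one_sub_norm_mul_sum_norm_coeff_le T hq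

/-- For `B = ℂ{T/r}` (a normed commutative ring with a distinguished
element `T` of norm `r`, `0 < r < 1`), if `Σ_{i=0}^{n+1} b_i U^i = (T - U) · Σ_{i=0}^n c_i U^i`
in `B[U]`, then `Σ_{i=0}^n ‖c_i‖ ≤ (1/(1-r)) · Σ_{k=0}^{n+1} ‖b_k‖`. -/
theorem stmt0 {B : Type*} [NormedCommRing B] (r : ℝ) (hr0 : 0 < r) (hr1 : r < 1)
    (T : B) (hT : ‖T‖ = r) (n : ℕ) (p q : Polynomial B)
    (hp : p.natDegree ≤ n + 1) (hq : q.natDegree ≤ n)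
    (heq : p = (Polynomial.C T - Polynomial.X) * q) :
    ∑ i ∈ Finset.range (n + 1), ‖q.coeff i‖ ≤
      (1 / (1 - r)) * ∑ k ∈ Finset.range (n + 2), ‖p.coeff k‖ :=
  stmt0_general r hr1 T hT n p q hq heq
end

section
/- The relation A ≤ A' defined on idempotent commutative algebra objects by 'there exists a map A' → A commuting with the unit maps' is a partial order (after identifying isomorphic idempotent algebras): it is reflexive, transitive, and antisymmetric, and any map A' → A commuting with units is unique. -/
/-!
Let `u_A = λ⁻¹ ≫ (e_A ▷ A)` and `v_A = ρ⁻¹ ≫ (A ◁ e_A)`; idempotence says `u_A` is invertible,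
and `v_A = u_A ≫ β` is then invertible too. For maps `f g : A' ⟶ A`, the interchange law gives
`u_{A'} ≫ (f ⊗ g) = g ≫ u_A` as soon as `f` is unit-compatible, and `v_{A'} ≫ (f ⊗ g) = f ≫ v_A`
as soon as `g` is. If both are unit-compatible, cancelling `v_{A'}` gives `g ⊗ f = g ⊗ g`, and then
cancelling `u_A` gives `f = g`. Antisymmetry follows: the two composites of opposite
unit-compatible maps are unit-compatible endomorphisms, hence identities.
-/

open CategoryTheory MonoidalCategory

/-- An idempotent (commutative) algebra object: an object `A` with a unit
`e : 𝟙_C ⟶ A` such that `A ≃ 𝟙_C ⊗ A → A ⊗ A` (via `e ▷ A`) is an isomorphism. -/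
structure IdemAlg (C : Type*) [Category C] [MonoidalCategory C] where
  obj : C
  unit : 𝟙_ C ⟶ obj
  idem : IsIso ((λ_ obj).inv ≫ (unit ▷ obj))

/-- The order relation: `A ≤ A'` iff there is a unit-compatible map `A' ⟶ A`. -/
def IdemAlg.le {C : Type*} [Category C] [MonoidalCategory C]
    (A A' : IdemAlg C) : Prop :=
  ∃ f : A'.obj ⟶ A.obj, A'.unit ≫ f = A.unit

namespace IdemAlg

variable {C : Type*} [Category C] [MonoidalCategory C]

def unitLeft (A : IdemAlg C) : A.obj ⟶ A.obj ⊗ A.obj := (λ_ A.obj).inv ≫ (A.unit ▷ A.obj)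

def unitRight (A : IdemAlg C) : A.obj ⟶ A.obj ⊗ A.obj := (ρ_ A.obj).inv ≫ (A.obj ◁ A.unit)

instance (A : IdemAlg C) : IsIso A.unitLeft := A.idem

lemma unitLeft_comp_tensorHom {A A' : IdemAlg C} {f : A'.obj ⟶ A.obj}
    (hf : A'.unit ≫ f = A.unit) (g : A'.obj ⟶ A.obj) :
    A'.unitLeft ≫ (f ⊗ₘ g) = g ≫ A.unitLeft := by
  rw [unitLeft, unitLeft, MonoidalCategory.tensorHom_def, Category.assoc,
    ← comp_whiskerRight_assoc, hf, ← whisker_exchange, leftUnitor_inv_naturality_assoc]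

lemma unitRight_comp_tensorHom {A A' : IdemAlg C} (f : A'.obj ⟶ A.obj) {g : A'.obj ⟶ A.obj}
    (hg : A'.unit ≫ g = A.unit) :
    A'.unitRight ≫ (f ⊗ₘ g) = f ≫ A.unitRight := by
  rw [unitRight, unitRight, tensorHom_def', Category.assoc, ← whiskerLeft_comp_assoc, hg,
    whisker_exchange, rightUnitor_inv_naturality_assoc]

lemma unitRight_eq_unitLeft_comp_braiding [BraidedCategory C] (A : IdemAlg C) :
    A.unitRight = A.unitLeft ≫ (β_ A.obj A.obj).hom := by
  rw [unitRight, unitLeft, Category.assoc, BraidedCategory.braiding_naturality_left,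
    leftUnitor_inv_braiding_assoc]

instance [BraidedCategory C] (A : IdemAlg C) : IsIso A.unitRight := by
  rw [unitRight_eq_unitLeft_comp_braiding]
  infer_instance

lemma hom_eq_of_unit_comp_eq [BraidedCategory C] {A A' : IdemAlg C} {f g : A'.obj ⟶ A.obj}
    (hf : A'.unit ≫ f = A.unit) (hg : A'.unit ≫ g = A.unit) : f = g := by
  have hgf : g ⊗ₘ f = g ⊗ₘ g := by
    rw [← cancel_epi A'.unitRight, unitRight_comp_tensorHom g hf, unitRight_comp_tensorHom g hg]
  rw [← cancel_mono A.unitLeft, ← unitLeft_comp_tensorHom hg, ← unitLeft_comp_tensorHom hg, hgf]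

lemma exists_iso_of_le_of_le [BraidedCategory C] {A A' : IdemAlg C} (h : A.le A')
    (h' : A'.le A) : ∃ e : A.obj ≅ A'.obj, A.unit ≫ e.hom = A'.unit := by
  obtain ⟨f, hf⟩ := h
  obtain ⟨g, hg⟩ := h'
  refine ⟨⟨g, f, hom_eq_of_unit_comp_eq ?_ (Category.comp_id _),
    hom_eq_of_unit_comp_eq ?_ (Category.comp_id _)⟩, hg⟩
  · rw [reassoc_of% hg, hf]
  · rw [reassoc_of% hf, hg]

end IdemAlg

/-- on idempotent commutative algebra objects of a symmetric
monoidal category, the relation `A ≤ A'` (existence of a unit-compatible map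
`A' ⟶ A`) is reflexive and transitive, any unit-compatible map `A' ⟶ A` is
unique, and the relation is antisymmetric up to (unit-compatible) isomorphism. -/
theorem stmt12 {C : Type*} [Category C] [MonoidalCategory C] [SymmetricCategory C] :
    (∀ A : IdemAlg C, A.le A) ∧
    (∀ A B D : IdemAlg C, A.le B → B.le D → A.le D) ∧
    (∀ A A' : IdemAlg C, ∀ f g : A'.obj ⟶ A.obj,
      A'.unit ≫ f = A.unit → A'.unit ≫ g = A.unit → f = g) ∧
    (∀ A A' : IdemAlg C, A.le A' → A'.le A →
      ∃ e : A.obj ≅ A'.obj, A.unit ≫ e.hom = A'.unit) := by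
  refine ⟨fun A => ⟨𝟙 A.obj, Category.comp_id _⟩, ?_,
    fun _ _ _ _ hf hg => IdemAlg.hom_eq_of_unit_comp_eq hf hg,
    fun _ _ => IdemAlg.exists_iso_of_le_of_le⟩
  rintro A B D ⟨f, hf⟩ ⟨g, hg⟩
  exact ⟨g ≫ f, by rw [reassoc_of% hg, hf]⟩
end

section
/- For idempotent commutative algebra objects A, A' in a symmetric monoidal category, A ≤ A' (i.e. there is a unit-compatible map A' → A) if and only if the unit map induces an isomorphism A ⊗ A' ≅ A. -/
/-!
A unit-compatible `f : A' ⟶ A` yields a candidate inverse `A ⊗ A' ⟶ A ⊗ A ⟶ A` of the unit map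
`A ⟶ A ⊗ A'`: first `A ◁ f`, then the multiplication of `A`, i.e. the inverse of its unit map.
It is a left inverse because `e' ≫ f = e`. It is also a right inverse because, `A'` being
idempotent, a map `X ⊗ A' ⟶ Y ⊗ A'` is determined by its composite with the unit map
`X ⟶ X ⊗ A'`. Conversely, an isomorphism `A ≅ A ⊗ A'` gives the unit-compatible map
`A' ≅ 𝟙 ⊗ A' ⟶ A ⊗ A' ≅ A`.
-/

open CategoryTheory MonoidalCategory

/-- An idempotent (commutative) algebra object: an object `A` with a unit
`e : 𝟙_C ⟶ A` such that `A ≃ 𝟙_C ⊗ A → A ⊗ A` (via `e ▷ A`) is an isomorphism. -/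
def IsIdempotentAlg {C : Type*} [Category C] [MonoidalCategory C]
    (A : C) (e : 𝟙_ C ⟶ A) : Prop :=
  IsIso ((λ_ A).inv ≫ (e ▷ A))

namespace IsIdempotentAlg

variable {C : Type*} [Category C] [MonoidalCategory C] {A : C} {e : 𝟙_ C ⟶ A}

lemma isIso_rightUnitor_inv_comp_whiskerLeft [BraidedCategory C] (h : IsIdempotentAlg A e) :
    IsIso ((ρ_ A).inv ≫ A ◁ e) := by
  have : IsIso ((λ_ A).inv ≫ e ▷ A) := h
  rw [show (ρ_ A).inv ≫ A ◁ e = ((λ_ A).inv ≫ e ▷ A) ≫ (β_ A A).hom by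
    simp [BraidedCategory.braiding_naturality_left]]
  infer_instance

lemma isIso_whiskerRight_rightUnitor_inv_comp_whiskerLeft (h : IsIdempotentAlg A e) (X : C) :
    IsIso (((ρ_ X).inv ≫ X ◁ e) ▷ A) := by
  have : IsIso ((λ_ A).inv ≫ e ▷ A) := h
  rw [show ((ρ_ X).inv ≫ X ◁ e) ▷ A = X ◁ ((λ_ A).inv ≫ e ▷ A) ≫ (α_ X A A).inv by
    simp]
  infer_instance

lemma isIso_rightUnitor_inv_comp_whiskerLeft_tensor [BraidedCategory C]
    (h : IsIdempotentAlg A e) (X : C) : IsIso ((ρ_ (X ⊗ A)).inv ≫ (X ⊗ A) ◁ e) := by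
  have := h.isIso_rightUnitor_inv_comp_whiskerLeft
  rw [show (ρ_ (X ⊗ A)).inv ≫ (X ⊗ A) ◁ e = X ◁ ((ρ_ A).inv ≫ A ◁ e) ≫ (α_ X A A).inv by
    simp]
  infer_instance

end IsIdempotentAlg

section

variable {C : Type*} [Category C] [MonoidalCategory C]

lemma rightUnitor_inv_comp_whiskerLeft_naturality {A X Y : C} (e : 𝟙_ C ⟶ A) (g : X ⟶ Y) :
    g ≫ (ρ_ Y).inv ≫ Y ◁ e = (ρ_ X).inv ≫ X ◁ e ≫ g ▷ A := by
  rw [rightUnitor_inv_naturality_assoc, whisker_exchange]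

lemma IsIdempotentAlg.hom_ext [BraidedCategory C] {A X Y : C} {e : 𝟙_ C ⟶ A}
    (h : IsIdempotentAlg A e) {g g' : X ⊗ A ⟶ Y ⊗ A}
    (hg : (ρ_ X).inv ≫ X ◁ e ≫ g = (ρ_ X).inv ≫ X ◁ e ≫ g') : g = g' := by
  have := h.isIso_whiskerRight_rightUnitor_inv_comp_whiskerLeft X
  have := h.isIso_rightUnitor_inv_comp_whiskerLeft_tensor Y
  have hwhisker : g ▷ A = g' ▷ A := by
    rw [← cancel_epi (((ρ_ X).inv ≫ X ◁ e) ▷ A), ← comp_whiskerRight, ← comp_whiskerRight,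
      Category.assoc, Category.assoc, hg]
  rw [← cancel_mono ((ρ_ (Y ⊗ A)).inv ≫ (Y ⊗ A) ◁ e), rightUnitor_inv_comp_whiskerLeft_naturality,
    rightUnitor_inv_comp_whiskerLeft_naturality, hwhisker]

lemma exists_unit_comp_eq_of_isIso {A A' : C} (e : 𝟙_ C ⟶ A) (e' : 𝟙_ C ⟶ A')
    (h : IsIso ((ρ_ A).inv ≫ A ◁ e')) : ∃ f : A' ⟶ A, e' ≫ f = e := by
  have hunits : e' ≫ (λ_ A').inv ≫ e ▷ A' = e ≫ (ρ_ A).inv ≫ A ◁ e' := by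
    rw [leftUnitor_inv_naturality_assoc, whisker_exchange, unitors_inv_equal,
      ← rightUnitor_inv_naturality_assoc]
  exact ⟨(λ_ A').inv ≫ e ▷ A' ≫ inv ((ρ_ A).inv ≫ A ◁ e'), by
    rw [reassoc_of% hunits, ← Category.assoc (ρ_ A).inv, IsIso.hom_inv_id, Category.comp_id]⟩

lemma isIso_of_unit_comp_eq [BraidedCategory C] {A A' : C} {e : 𝟙_ C ⟶ A} {e' : 𝟙_ C ⟶ A'}
    (hA : IsIdempotentAlg A e) (hA' : IsIdempotentAlg A' e') (f : A' ⟶ A) (hf : e' ≫ f = e) :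
    IsIso ((ρ_ A).inv ≫ A ◁ e') := by
  have := hA.isIso_rightUnitor_inv_comp_whiskerLeft
  have hsection : ((ρ_ A).inv ≫ A ◁ e') ≫ A ◁ f ≫ inv ((ρ_ A).inv ≫ A ◁ e) = 𝟙 A := by
    rw [Category.assoc, ← whiskerLeft_comp_assoc, hf, ← Category.assoc, IsIso.hom_inv_id]
  refine ⟨⟨A ◁ f ≫ inv ((ρ_ A).inv ≫ A ◁ e), hsection, hA'.hom_ext ?_⟩⟩
  rw [Category.comp_id, ← Category.assoc, ← Category.assoc, hsection, Category.id_comp]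

end

/-- for idempotent algebras `A, A'` in a symmetric monoidal
category, `A ≤ A'` (there is a unit-compatible map `A' ⟶ A`) iff the unit of `A'`
induces an isomorphism `A ≃ A ⊗ 𝟙 → A ⊗ A'`. -/
theorem stmt13 {C : Type*} [Category C] [MonoidalCategory C] [SymmetricCategory C]
    (A A' : C) (e : 𝟙_ C ⟶ A) (e' : 𝟙_ C ⟶ A')
    (hA : IsIdempotentAlg A e) (hA' : IsIdempotentAlg A' e') :
    (∃ f : A' ⟶ A, e' ≫ f = e) ↔ IsIso ((ρ_ A).inv ≫ (A ◁ e')) :=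
  ⟨fun ⟨f, hf⟩ => isIso_of_unit_comp_eq hA hA' f hf, exists_unit_comp_eq_of_isIso e e'⟩
end
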